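/- arXiv:2203.02396 — 4 statements merged into one kernel-verified Lean document; each statement's English description precedes it below -/
import Mathlib

section
/- Consider the Aggregated Heavy-Ball iterates: given f : ℝⁿ → ℝ differentiable, momentum parameters βᵢ ∈ [0,1), stepsizes γᵢ > 0 (i = 1,…,m), with V_k^{(i)} = βᵢ V_{k-1}^{(i)} + ∇f(x_k) and x_{k+1} = x_k - (1/m)∑ᵢ γᵢ V_k^{(i)}. Define the virtual iterates x̃_k = x_k - (1/m)∑ᵢ (βᵢγᵢ/(1-βᵢ)) V_{k-1}^{(i)}. Then for all k ≥ 0, x̃_{k+1} = x̃_k - (1/m)(∑ᵢ γᵢ/(1-βᵢ)) ∇f(x_k). -/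
/-- Virtual iterates of the Aggregated Heavy-Ball method satisfy a
gradient-descent-like recursion with effective stepsize
`F = (1/m) ∑ᵢ γᵢ/(1-βᵢ)`. Here there are `m+1` momentum vectors,
`V i k` denotes `V_k^{(i)}` (with `V_{-1}^{(i)} = 0`, so
`V i 0 = ∇f(x_0)`), and `xt k` denotes the virtual iterate `x̃_k`. -/
theorem AggHB_virtual_iterates_recursion {n : ℕ} (f : EuclideanSpace ℝ (Fin n) → ℝ)
    (hf : Differentiable ℝ f) (m : ℕ)
    (β γ : Fin (m + 1) → ℝ) (hβ : ∀ i, β i ∈ Set.Ico (0 : ℝ) 1) (hγ : ∀ i, 0 < γ i)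
    (x : ℕ → EuclideanSpace ℝ (Fin n)) (V : Fin (m + 1) → ℕ → EuclideanSpace ℝ (Fin n))
    (hV0 : ∀ i, V i 0 = gradient f (x 0))
    (hV : ∀ i k, V i (k + 1) = β i • V i k + gradient f (x (k + 1)))
    (hx : ∀ k, x (k + 1) = x k - (1 / (m + 1 : ℝ)) • ∑ i, γ i • V i k)
    (xt : ℕ → EuclideanSpace ℝ (Fin n))
    (hxt0 : xt 0 = x 0)
    (hxt : ∀ k, xt (k + 1) = x (k + 1) - (1 / (m + 1 : ℝ)) •
      ∑ i, (β i * γ i / (1 - β i)) • V i k) :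
    ∀ k, xt (k + 1) = xt k - ((1 / (m + 1 : ℝ)) * ∑ i, γ i / (1 - β i)) •
      gradient f (x k) := by
  have hne : ∀ i, (1 - β i) ≠ 0 := fun i => ne_of_gt (by have := (hβ i).2; linarith)
  -- combine the two sums into one with coefficients γᵢ/(1-βᵢ)
  have key : ∀ (w : Fin (m + 1) → EuclideanSpace ℝ (Fin n)),
      (∑ i, γ i • w i) + (∑ i, (β i * γ i / (1 - β i)) • w i)
        = ∑ i, (γ i / (1 - β i)) • w i := by
    intro w
    rw [← Finset.sum_add_distrib]
    refine Finset.sum_congr rfl fun i _ => ?_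
    rw [← add_smul]
    congr 1
    field_simp [hne i]
    ring
  have hsmul : ∀ (g : EuclideanSpace ℝ (Fin n)),
      ((1 / (m + 1 : ℝ)) * ∑ i, γ i / (1 - β i)) • g
        = (1 / (m + 1 : ℝ)) • ∑ i, (γ i / (1 - β i)) • g := by
    intro g
    rw [mul_smul, Finset.sum_smul]
  intro k
  cases k with
  | zero =>
      rw [hxt 0, hx 0, hxt0, hsmul]
      simp only [hV0]
      rw [sub_sub, ← smul_add, key]
  | succ k =>
      rw [hxt (k + 1), hx (k + 1), hxt k, hsmul]
      rw [sub_sub, ← smul_add, key]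
      have expand : ∀ i, (γ i / (1 - β i)) • V i (k + 1)
          = (β i * γ i / (1 - β i)) • V i k
            + (γ i / (1 - β i)) • gradient f (x (k + 1)) := by
        intro i
        rw [hV i k, smul_add, smul_smul]
        congr 2
        ring
      simp only [expand]
      rw [Finset.sum_add_distrib, smul_add, sub_sub, ← smul_add]
end

section
/- Let f : ℝⁿ → ℝ be L-smooth, μ-strongly convex with minimizer x_*. Let x̃_{k+1} = x̃_k - F∇f(x_k) with F > 0 and F ≤ 1/(4L), where x̃_k, x_k ∈ ℝⁿ are arbitrary points related by this recursion. Then (F/2)(f(x_k) - f(x_*)) ≤ (1 - μF/2)‖x̃_k - x_*‖² - ‖x̃_{k+1} - x_*‖² + 3LF‖x_k - x̃_k‖². -/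
open scoped RealInnerProductSpace

/-!
Expanding the gradient step gives
`‖x̃ₖ₊₁ - x⋆‖² = ‖x̃ₖ - x⋆‖² - 2F⟪∇f xₖ, x̃ₖ - x⋆⟫ + F²‖∇f xₖ‖²`, and we split
`x̃ₖ - x⋆ = (xₖ - x⋆) - (xₖ - x̃ₖ)`. Strong convexity bounds `⟪∇f xₖ, xₖ - x⋆⟫` from below by
`f xₖ - f x⋆ + μ/2 ‖xₖ - x⋆‖²`. The descent lemma, combined with minimality of `x⋆`, bounds
`⟪∇f xₖ, xₖ - x̃ₖ⟫` by `(f xₖ - f x⋆)/2 + L‖xₖ - x̃ₖ‖²` (descend from `xₖ` along `-2(xₖ - x̃ₖ)`)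
and gives `‖∇f xₖ‖² ≤ 2L(f xₖ - f x⋆)`, so `F²‖∇f xₖ‖² ≤ F(f xₖ - f x⋆)/2` as `4LF ≤ 1`.
The leftover `μ`-terms are absorbed by `‖a + b‖² ≤ 2‖a‖² + 2‖b‖²` and `μ ≤ L`.
-/

section

variable {E : Type*} [NormedAddCommGroup E] [InnerProductSpace ℝ E] [CompleteSpace E]
  {f : E → ℝ} {L μ : ℝ}

theorem hasDerivAt_comp_add_smul (hf : Differentiable ℝ f) (x v : E) (t : ℝ) :
    HasDerivAt (fun s : ℝ => f (x + s • v)) ⟪gradient f (x + t • v), v⟫ t := by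
  rw [inner_gradient_left]
  exact (hf _).hasFDerivAt.comp_hasDerivAt t
    (by simpa using ((hasDerivAt_id t).smul_const v).const_add x)

theorem le_add_inner_gradient_add_of_lipschitz_gradient (hf : Differentiable ℝ f)
    (hsmooth : ∀ x y, ‖gradient f x - gradient f y‖ ≤ L * ‖x - y‖) (x y : E) :
    f y ≤ f x + ⟪gradient f x, y - x⟫ + L / 2 * ‖y - x‖ ^ 2 := by
  set v := y - x
  -- `φ` is antitone on `[0, ∞)`; comparing `φ 1` with `φ 0` is the claim.
  let φ : ℝ → ℝ := fun t => f (x + t • v) - t * ⟪gradient f x, v⟫ - L / 2 * t ^ 2 * ‖v‖ ^ 2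
  have hφ : ∀ t, HasDerivAt φ
      (⟪gradient f (x + t • v), v⟫ - ⟪gradient f x, v⟫ - L * t * ‖v‖ ^ 2) t := by
    intro t
    refine (((hasDerivAt_comp_add_smul hf x v t).sub
      ((hasDerivAt_id' t).mul_const ⟪gradient f x, v⟫)).sub
      (((hasDerivAt_pow 2 t).const_mul (L / 2)).mul_const (‖v‖ ^ 2))).congr_deriv ?_
    simp only [Nat.cast_ofNat, Nat.add_one_sub_one, pow_one]
    ring
  have hφ' : ∀ t ∈ interior (Set.Ici (0 : ℝ)), deriv φ t ≤ 0 := by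
    intro t ht
    rw [interior_Ici, Set.mem_Ioi] at ht
    have hgrad : ‖gradient f (x + t • v) - gradient f x‖ ≤ L * (t * ‖v‖) := by
      simpa [norm_smul, abs_of_pos ht] using hsmooth (x + t • v) x
    have := real_inner_le_norm (gradient f (x + t • v) - gradient f x) v
    rw [(hφ t).deriv, sub_sub, sub_nonpos, ← sub_le_iff_le_add', ← inner_sub_left]
    nlinarith [norm_nonneg v]
  have hanti := antitoneOn_of_deriv_nonpos (convex_Ici 0)
    (fun t _ => (hφ t).continuousAt.continuousWithinAt)
    (fun t _ => (hφ t).differentiableAt.differentiableWithinAt) hφ'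
    Set.self_mem_Ici (Set.mem_Ici.2 zero_le_one) zero_le_one
  simp only [φ, v, one_smul, zero_smul, add_zero, add_sub_cancel, one_pow, one_mul, zero_mul,
    mul_zero, sub_zero, zero_pow two_ne_zero] at hanti
  linarith

theorem sq_norm_gradient_le (hf : Differentiable ℝ f)
    (hsmooth : ∀ x y, ‖gradient f x - gradient f y‖ ≤ L * ‖x - y‖)
    {xstar : E} (hmin : ∀ y, f xstar ≤ f y) (hL : 0 < L) (x : E) :
    ‖gradient f x‖ ^ 2 ≤ 2 * L * (f x - f xstar) := by
  have h := (hmin _).trans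
    (le_add_inner_gradient_add_of_lipschitz_gradient hf hsmooth x (x - L⁻¹ • gradient f x))
  rw [sub_sub_cancel_left, inner_neg_right, norm_neg, real_inner_smul_right,
    real_inner_self_eq_norm_sq, norm_smul, Real.norm_of_nonneg (inv_nonneg.2 hL.le)] at h
  field_simp at h
  nlinarith

theorem inner_gradient_le (hf : Differentiable ℝ f)
    (hsmooth : ∀ x y, ‖gradient f x - gradient f y‖ ≤ L * ‖x - y‖)
    {xstar : E} (hmin : ∀ y, f xstar ≤ f y) (x v : E) :
    ⟪gradient f x, v⟫ ≤ (f x - f xstar) / 2 + L * ‖v‖ ^ 2 := by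
  have h := (hmin _).trans
    (le_add_inner_gradient_add_of_lipschitz_gradient hf hsmooth x (x - (2 : ℝ) • v))
  rw [sub_sub_cancel_left, inner_neg_right, norm_neg, real_inner_smul_right, norm_smul,
    Real.norm_two] at h
  linarith

theorem inner_gradient_sub_le
    (hsmooth : ∀ x y, ‖gradient f x - gradient f y‖ ≤ L * ‖x - y‖) (x y : E) :
    ⟪gradient f x - gradient f y, x - y⟫ ≤ L * ‖x - y‖ ^ 2 :=
  (real_inner_le_norm _ _).trans <| by
    nlinarith [mul_le_mul_of_nonneg_right (hsmooth x y) (norm_nonneg (x - y))]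

theorem mul_sq_norm_sub_le_inner_gradient_sub
    (hstrconv : ∀ x y, f x + ⟪gradient f x, y - x⟫ + μ / 2 * ‖y - x‖ ^ 2 ≤ f y) (x y : E) :
    μ * ‖x - y‖ ^ 2 ≤ ⟪gradient f x - gradient f y, x - y⟫ := by
  have hxy := hstrconv x y
  have hyx := hstrconv y x
  rw [← neg_sub x y, inner_neg_right, norm_neg] at hxy
  rw [inner_sub_left]
  linarith

end

/-- One-iteration progress lemma (Lemma 1) for the AggHB virtual iterates:
if `x̃_{k+1} = x̃_k - F ∇f(x_k)` with `0 < F ≤ 1/(4L)`, then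
`(F/2)(f(x_k) - f(x_*)) ≤ (1 - μF/2)‖x̃_k - x_*‖² - ‖x̃_{k+1} - x_*‖² + 3LF‖x_k - x̃_k‖²`. -/
theorem AggHB_one_iter_progress {n : ℕ}
    (f : EuclideanSpace ℝ (Fin n) → ℝ) (hf : Differentiable ℝ f)
    (L μ : ℝ) (hL : 0 < L) (hμ : 0 ≤ μ)
    (hsmooth : ∀ x y, ‖gradient f x - gradient f y‖ ≤ L * ‖x - y‖)
    (hstrconv : ∀ x y, f x + ⟪gradient f x, y - x⟫ + μ / 2 * ‖y - x‖ ^ 2 ≤ f y)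
    (xstar : EuclideanSpace ℝ (Fin n)) (hmin : ∀ y, f xstar ≤ f y)
    (F : ℝ) (hF : 0 < F) (hF4L : F ≤ 1 / (4 * L))
    (xtk xtk1 xk : EuclideanSpace ℝ (Fin n))
    (hrec : xtk1 = xtk - F • gradient f xk) :
    F / 2 * (f xk - f xstar) ≤
      (1 - μ * F / 2) * ‖xtk - xstar‖ ^ 2 - ‖xtk1 - xstar‖ ^ 2 +
        3 * L * F * ‖xk - xtk‖ ^ 2 := by
  subst hrec
  set g := gradient f xk
  have hstep : ‖xtk - F • g - xstar‖ ^ 2 =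
      ‖xtk - xstar‖ ^ 2 - 2 * F * (⟪g, xk - xstar⟫ - ⟪g, xk - xtk⟫) + F ^ 2 * ‖g‖ ^ 2 := by
    rw [sub_right_comm, norm_sub_sq_real, real_inner_smul_right, norm_smul, mul_pow,
      Real.norm_eq_abs, sq_abs, real_inner_comm, ← inner_sub_right, sub_sub_sub_cancel_left]
    ring
  have hxstar : f xk - f xstar + μ / 2 * ‖xk - xstar‖ ^ 2 ≤ ⟪g, xk - xstar⟫ := by
    have h := hstrconv xk xstar
    rw [← neg_sub xk xstar, inner_neg_right, norm_neg] at h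
    linarith
  have hxtk := inner_gradient_le hf hsmooth hmin xk (xk - xtk)
  have hμL : μ * ‖xk - xtk‖ ^ 2 ≤ L * ‖xk - xtk‖ ^ 2 :=
    (mul_sq_norm_sub_le_inner_gradient_sub hstrconv xk xtk).trans
      (inner_gradient_sub_le hsmooth xk xtk)
  have hsplit : ‖xtk - xstar‖ ^ 2 ≤ 2 * (‖xk - xstar‖ ^ 2 + ‖xk - xtk‖ ^ 2) := by
    have h := norm_add_le (xk - xstar) (xtk - xk)
    rw [sub_add_sub_cancel', norm_sub_rev xtk xk] at h
    exact (pow_le_pow_left₀ (norm_nonneg _) h 2).trans add_sq_le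
  have hgrad : F * ‖g‖ ^ 2 ≤ (f xk - f xstar) / 2 := by
    have h := sq_norm_gradient_le hf hsmooth hmin hL xk
    rw [le_div_iff₀ (by positivity)] at hF4L
    nlinarith [sq_nonneg ‖g‖]
  rw [hstep]
  linarith [mul_le_mul_of_nonneg_left hsplit (by positivity : 0 ≤ μ * F / 2),
    mul_le_mul_of_nonneg_left hxstar hF.le, mul_le_mul_of_nonneg_left hxtk hF.le,
    mul_le_mul_of_nonneg_left hμL hF.le, mul_le_mul_of_nonneg_left hgrad hF.le]
end

section
/- Suppose for nonnegative reals r_0, r_1, …, s_0, s_1, … and constants F > 0, μ ≥ 0 with μF/2 < 1 we have (F/2)s_k ≤ (1 - μF/2)r_k - r_{k+1} + e_k for all k, where the error terms satisfy ∑_{k=0}^K w_k e_k ≤ (F/4)∑_{k=0}^K w_k s_k with w_k = (1-μF/2)^{-(k+1)}. Then (1/W_K)∑_{k=0}^K w_k s_k ≤ 4r_0/(F W_K), where W_K = ∑_{k=0}^K w_k. -/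
/-!
Multiplying the `k`-th recursion by `w k = a⁻¹ ^ (k + 1)`, where `a = 1 - μF/2`, turns the
contraction term `a * r k` into `a⁻¹ ^ k * r k`, so the weighted recursions telescope to
`(F/2) ∑ w s ≤ r 0 + ∑ w e ≤ r 0 + (F/4) ∑ w s`, i.e. `∑ w s ≤ 4 r 0 / F`.
-/

open Finset

theorem sum_inv_pow_mul_le_of_le_mul_sub_add {a : ℝ} (ha : 0 < a) {r d e : ℕ → ℝ}
    (h : ∀ k, d k ≤ a * r k - r (k + 1) + e k) (n : ℕ) :
    ∑ k ∈ range n, a⁻¹ ^ (k + 1) * d k ≤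
      r 0 - a⁻¹ ^ n * r n + ∑ k ∈ range n, a⁻¹ ^ (k + 1) * e k := by
  induction n with
  | zero => simp
  | succ n ih =>
    have hstep : a⁻¹ ^ (n + 1) * d n ≤
        a⁻¹ ^ n * r n - a⁻¹ ^ (n + 1) * r (n + 1) + a⁻¹ ^ (n + 1) * e n := by
      have hcancel : a⁻¹ ^ (n + 1) * a = a⁻¹ ^ n := by
        rw [pow_succ, mul_assoc, inv_mul_cancel₀ ha.ne', mul_one]
      calc a⁻¹ ^ (n + 1) * d n ≤ a⁻¹ ^ (n + 1) * (a * r n - r (n + 1) + e n) := by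
            gcongr
            exact h n
        _ = _ := by rw [mul_add, mul_sub, ← mul_assoc, hcancel]
    rw [sum_range_succ, sum_range_succ]
    linarith

theorem sum_inv_pow_mul_le_of_le_mul_sub_add_of_nonneg {a : ℝ} (ha : 0 < a) {r d e : ℕ → ℝ}
    (hr : ∀ k, 0 ≤ r k) (h : ∀ k, d k ≤ a * r k - r (k + 1) + e k) (n : ℕ) :
    ∑ k ∈ range n, a⁻¹ ^ (k + 1) * d k ≤ r 0 + ∑ k ∈ range n, a⁻¹ ^ (k + 1) * e k := by
  have := sum_inv_pow_mul_le_of_le_mul_sub_add ha h n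
  have : 0 ≤ a⁻¹ ^ n * r n := mul_nonneg (by positivity) (hr n)
  linarith

theorem weighted_telescoping_general (F μ : ℝ) (hF : 0 < F)
    (hμF : μ * F / 2 < 1) (r s e : ℕ → ℝ)
    (hr : ∀ k, 0 ≤ r k)
    (w : ℕ → ℝ) (hw : ∀ k, w k = ((1 - μ * F / 2)⁻¹) ^ (k + 1))
    (hstep : ∀ k, F / 2 * s k ≤ (1 - μ * F / 2) * r k - r (k + 1) + e k)
    (K : ℕ)
    (herr : ∑ k ∈ Finset.range (K + 1), w k * e k ≤
      F / 4 * ∑ k ∈ Finset.range (K + 1), w k * s k) :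
    (1 / ∑ k ∈ Finset.range (K + 1), w k) * ∑ k ∈ Finset.range (K + 1), w k * s k ≤
      4 * r 0 / (F * ∑ k ∈ Finset.range (K + 1), w k) := by
  have ha : 0 < 1 - μ * F / 2 := by linarith
  have hW : 0 < ∑ k ∈ range (K + 1), w k :=
    sum_pos (fun k _ => by rw [hw]; positivity) nonempty_range_add_one
  have htel := sum_inv_pow_mul_le_of_le_mul_sub_add_of_nonneg ha hr hstep (K + 1)
  simp only [← hw, mul_left_comm _ (F / 2), ← mul_sum] at htel
  have hS : ∑ k ∈ range (K + 1), w k * s k ≤ 4 * r 0 / F := by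
    rw [le_div_iff₀ hF]
    linarith
  rw [one_div_mul_eq_div, ← div_div]
  exact div_le_div_of_nonneg_right hS hW.le

/-- Abstract weighted telescoping argument underlying Theorem 2. -/
theorem weighted_telescoping (F μ : ℝ) (hF : 0 < F) (hμ : 0 ≤ μ)
    (hμF : μ * F / 2 < 1) (r s e : ℕ → ℝ)
    (hr : ∀ k, 0 ≤ r k) (hs : ∀ k, 0 ≤ s k)
    (w : ℕ → ℝ) (hw : ∀ k, w k = ((1 - μ * F / 2)⁻¹) ^ (k + 1))
    (hstep : ∀ k, F / 2 * s k ≤ (1 - μ * F / 2) * r k - r (k + 1) + e k)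
    (K : ℕ)
    (herr : ∑ k ∈ Finset.range (K + 1), w k * e k ≤
      F / 4 * ∑ k ∈ Finset.range (K + 1), w k * s k) :
    (1 / ∑ k ∈ Finset.range (K + 1), w k) * ∑ k ∈ Finset.range (K + 1), w k * s k ≤
      4 * r 0 / (F * ∑ k ∈ Finset.range (K + 1), w k) :=
  weighted_telescoping_general F μ hF hμF r s e hr w hw hstep K herr
end

section
/- In the AggHB method with constant stepsize γᵢ = γ and parameters βᵢ ∈ [0,1), the squared deviation between the true and virtual iterates satisfies ‖x_{k+1} - x̃_{k+1}‖² ≤ B_k F ∑_{t=0}^k (max_i βᵢ)^{k-t+1} ‖∇f(x_t)‖², where B_k = (1/m)∑ᵢ βᵢγᵢ(1-βᵢ^{k+1})/(1-βᵢ)² and F = (1/m)∑ᵢ γᵢ/(1-βᵢ). -/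
open Finset

lemma jensen_norm_sq {E : Type*} [NormedAddCommGroup E] [NormedSpace ℝ E]
    {J : Type*} (s : Finset J) (c : J → ℝ) (v : J → E) (hc : ∀ j ∈ s, 0 ≤ c j) :
    ‖∑ j ∈ s, c j • v j‖ ^ 2 ≤ (∑ j ∈ s, c j) * ∑ j ∈ s, c j * ‖v j‖ ^ 2 := by
  have h1 : ‖∑ j ∈ s, c j • v j‖ ≤ ∑ j ∈ s, c j * ‖v j‖ := by
    refine (norm_sum_le _ _).trans (le_of_eq ?_)
    refine Finset.sum_congr rfl fun j hj => ?_
    rw [norm_smul, Real.norm_eq_abs, abs_of_nonneg (hc j hj)]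
  have h2 : (∑ j ∈ s, c j * ‖v j‖) ^ 2 ≤ (∑ j ∈ s, c j) * ∑ j ∈ s, c j * ‖v j‖ ^ 2 := by
    have hcs := Finset.sum_mul_sq_le_sq_mul_sq s (fun j => Real.sqrt (c j))
      (fun j => Real.sqrt (c j) * ‖v j‖)
    have e1 : ∀ j ∈ s, Real.sqrt (c j) * (Real.sqrt (c j) * ‖v j‖) = c j * ‖v j‖ := by
      intro j hj
      rw [← mul_assoc, Real.mul_self_sqrt (hc j hj)]
    have e2 : ∀ j ∈ s, Real.sqrt (c j) ^ 2 = c j := fun j hj => Real.sq_sqrt (hc j hj)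
    have e3 : ∀ j ∈ s, (Real.sqrt (c j) * ‖v j‖) ^ 2 = c j * ‖v j‖ ^ 2 := by
      intro j hj
      rw [mul_pow, Real.sq_sqrt (hc j hj)]
    rw [Finset.sum_congr rfl e1, Finset.sum_congr rfl e2, Finset.sum_congr rfl e3] at hcs
    exact hcs
  calc ‖∑ j ∈ s, c j • v j‖ ^ 2 ≤ (∑ j ∈ s, c j * ‖v j‖) ^ 2 :=
        pow_le_pow_left₀ (norm_nonneg _) h1 2
    _ ≤ _ := h2

/-- Bound on the squared deviation between the true and virtual AggHB iterates
(constant stepsize `γᵢ = γ`):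
`‖x_{k+1} - x̃_{k+1}‖² ≤ B_k F ∑_{t=0}^k (max_i βᵢ)^{k-t+1} ‖∇f(x_t)‖²`. -/
theorem AggHB_deviation_bound {n : ℕ}
    (f : EuclideanSpace ℝ (Fin n) → ℝ) (hf : Differentiable ℝ f)
    (m : ℕ) (β : Fin (m + 1) → ℝ) (γ : ℝ)
    (hβ : ∀ i, β i ∈ Set.Ico (0 : ℝ) 1) (hγ : 0 < γ)
    (βmax : ℝ) (hβmax : βmax = Finset.univ.sup' Finset.univ_nonempty β)
    (F : ℝ) (hF : F = (1 / (m + 1 : ℝ)) * ∑ i, γ / (1 - β i))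
    (B : ℕ → ℝ) (hB : ∀ k, B k = (1 / (m + 1 : ℝ)) *
      ∑ i, β i * γ * (1 - (β i) ^ (k + 1)) / (1 - β i) ^ 2)
    (x : ℕ → EuclideanSpace ℝ (Fin n)) (V : Fin (m + 1) → ℕ → EuclideanSpace ℝ (Fin n))
    (hV0 : ∀ i, V i 0 = gradient f (x 0))
    (hV : ∀ i k, V i (k + 1) = β i • V i k + gradient f (x (k + 1)))
    (hx : ∀ k, x (k + 1) = x k - (1 / (m + 1 : ℝ)) • ∑ i, γ • V i k)
    (xt : ℕ → EuclideanSpace ℝ (Fin n))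
    (hxt : ∀ k, xt (k + 1) = x (k + 1) - (1 / (m + 1 : ℝ)) •
      ∑ i, (β i * γ / (1 - β i)) • V i k) :
    ∀ k, ‖x (k + 1) - xt (k + 1)‖ ^ 2 ≤
      B k * F * ∑ t ∈ Finset.range (k + 1),
        βmax ^ (k - t + 1) * ‖gradient f (x t)‖ ^ 2 := by
  intro k
  set g : ℕ → EuclideanSpace ℝ (Fin n) := fun t => gradient f (x t) with hg
  have hβ1 : ∀ i, (1 : ℝ) - β i > 0 := fun i => by have := (hβ i).2; linarith
  have hβ0 : ∀ i, (0 : ℝ) ≤ β i := fun i => (hβ i).1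
  have hβle : ∀ i, β i ≤ βmax := by
    intro i; rw [hβmax]; exact Finset.le_sup' β (Finset.mem_univ i)
  have hm : (0 : ℝ) < 1 / (m + 1 : ℝ) := by positivity
  -- closed form of V
  have hVsum : ∀ (i : Fin (m + 1)) (k : ℕ),
      V i k = ∑ t ∈ range (k + 1), (β i) ^ (k - t) • g t := by
    intro i k
    induction k with
    | zero => simp [hV0]; rfl
    | succ k ih =>
      rw [hV i k]
      rw [ih]
      rw [Finset.smul_sum]
      have hsum : ∀ t ∈ range (k + 1),
          β i • (β i ^ (k - t) • g t) = β i ^ (k + 1 - t) • g t := by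
        intro t ht
        have ht' : k + 1 - t = (k - t) + 1 := by
          have : t ≤ k := Nat.lt_succ_iff.mp (Finset.mem_range.mp ht)
          omega
        rw [smul_smul, ht', pow_succ, mul_comm]
      rw [Finset.sum_congr rfl hsum, Finset.sum_range_succ _ (k + 1)]
      simp; rfl
  -- the deviation as a double sum
  set c : Fin (m + 1) × ℕ → ℝ :=
    fun p => (1 / (m + 1 : ℝ)) * (β p.1 * γ / (1 - β p.1) * (β p.1) ^ (k - p.2)) with hc
  have hcnn : ∀ p ∈ Finset.univ ×ˢ range (k + 1), 0 ≤ c p := by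
    intro p _
    have h1 := hβ1 p.1
    have h0 := hβ0 p.1
    have := hγ.le
    positivity
  have hd : x (k + 1) - xt (k + 1)
      = ∑ p ∈ Finset.univ ×ˢ range (k + 1), c p • g p.2 := by
    rw [hxt, sub_sub_cancel, Finset.smul_sum, Finset.sum_product]
    refine Finset.sum_congr rfl fun i _ => ?_
    rw [hVsum i k, Finset.smul_sum, Finset.smul_sum]
    refine Finset.sum_congr rfl fun t _ => ?_
    simp only [hc]
    rw [smul_smul, smul_smul, mul_assoc]
  -- geometric sum
  have hgeo : ∀ i : Fin (m + 1), ∑ t ∈ range (k + 1), (β i) ^ (k - t)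
      = (1 - (β i) ^ (k + 1)) / (1 - β i) := by
    intro i
    have hne : β i ≠ 1 := ne_of_lt (hβ i).2
    have hr : ∑ t ∈ range (k + 1), (β i) ^ (k - t) = ∑ t ∈ range (k + 1), (β i) ^ t := by
      rw [← Finset.sum_range_reflect]
      refine Finset.sum_congr rfl fun t ht => ?_
      have : t ≤ k := Nat.lt_succ_iff.mp (Finset.mem_range.mp ht)
      congr 1
      omega
    rw [hr, geom_sum_eq hne, ← neg_div_neg_eq]
    ring_nf
  -- total weight equals B k
  have hS1 : ∑ p ∈ Finset.univ ×ˢ range (k + 1), c p = B k := by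
    rw [Finset.sum_product, hB k, Finset.mul_sum]
    refine Finset.sum_congr rfl fun i _ => ?_
    simp only [hc]
    rw [← Finset.mul_sum, ← Finset.mul_sum, hgeo i, div_mul_div_comm, ← sq]
  have hBnn : 0 ≤ B k := by
    rw [← hS1]; exact Finset.sum_nonneg hcnn
  have hβmax0 : 0 ≤ βmax := le_trans (hβ0 0) (hβle 0)
  -- per-time coefficient bound
  have hcoef : ∀ t, t ∈ range (k + 1) →
      ∑ i : Fin (m + 1), c (i, t) ≤ F * βmax ^ (k - t + 1) := by
    intro t _
    rw [hF, Finset.mul_sum, Finset.sum_mul]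
    refine Finset.sum_le_sum fun i _ => ?_
    simp only [hc]
    have h1 := hβ1 i
    have hpow : (β i) ^ (k - t + 1) ≤ βmax ^ (k - t + 1) :=
      pow_le_pow_left₀ (hβ0 i) (hβle i) _
    have key : β i * γ / (1 - β i) * β i ^ (k - t)
        = γ / (1 - β i) * β i ^ (k - t + 1) := by
      rw [pow_succ]; field_simp
    rw [key]
    have hγd : 0 ≤ γ / (1 - β i) := by positivity
    calc 1 / (m + 1 : ℝ) * (γ / (1 - β i) * β i ^ (k - t + 1))
        ≤ 1 / (m + 1 : ℝ) * (γ / (1 - β i) * βmax ^ (k - t + 1)) := by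
          exact mul_le_mul_of_nonneg_left (mul_le_mul_of_nonneg_left hpow hγd) hm.le
      _ = 1 / (m + 1 : ℝ) * (γ / (1 - β i)) * βmax ^ (k - t + 1) := by ring
  have hS2 : ∑ p ∈ Finset.univ ×ˢ range (k + 1), c p * ‖g p.2‖ ^ 2
      ≤ F * ∑ t ∈ range (k + 1), βmax ^ (k - t + 1) * ‖g t‖ ^ 2 := by
    rw [Finset.sum_product, Finset.sum_comm, Finset.mul_sum]
    refine Finset.sum_le_sum fun t ht => ?_
    calc ∑ i : Fin (m + 1), c (i, t) * ‖g (i, t).2‖ ^ 2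
        = ∑ i : Fin (m + 1), c (i, t) * ‖g t‖ ^ 2 := rfl
      _ = (∑ i : Fin (m + 1), c (i, t)) * ‖g t‖ ^ 2 := (Finset.sum_mul _ _ _).symm
      _ ≤ (F * βmax ^ (k - t + 1)) * ‖g t‖ ^ 2 :=
          mul_le_mul_of_nonneg_right (hcoef t ht) (by positivity)
      _ = F * (βmax ^ (k - t + 1) * ‖g t‖ ^ 2) := by ring
  calc ‖x (k + 1) - xt (k + 1)‖ ^ 2
      = ‖∑ p ∈ Finset.univ ×ˢ range (k + 1), c p • g p.2‖ ^ 2 := by rw [hd]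
    _ ≤ (∑ p ∈ Finset.univ ×ˢ range (k + 1), c p)
        * ∑ p ∈ Finset.univ ×ˢ range (k + 1), c p * ‖g p.2‖ ^ 2 :=
        jensen_norm_sq _ _ _ hcnn
    _ = B k * ∑ p ∈ Finset.univ ×ˢ range (k + 1), c p * ‖g p.2‖ ^ 2 := by rw [hS1]
    _ ≤ B k * (F * ∑ t ∈ range (k + 1), βmax ^ (k - t + 1) * ‖g t‖ ^ 2) :=
        mul_le_mul_of_nonneg_left hS2 hBnn
    _ = B k * F * ∑ t ∈ range (k + 1), βmax ^ (k - t + 1) * ‖g t‖ ^ 2 := by ring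
end
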